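/- arXiv:1108.1486 — 3 statements merged into one kernel-verified Lean document; each statement's English description precedes it below -/
import Mathlib

section
/- Let P be a finite set of polynomials in K[x_1,…,x_n] containing a nonzero polynomial, let M = [M_1,…,M_r] be a medial set of P with M_1 nonconstant, and let M be a nonzero polynomial that is reduced with respect to M. Then every medial set M′ of the enlarged set P ∪ {M_1,…,M_r} ∪ {M} has strictly lower ranking than M, i.e. M′ ≺ M. -/
open MvPolynomial

variable {n : ℕ} {K : Type*} [Field K]

/-- Lexicographic order on monomials (exponent vectors) induced by the variable
ordering `x_1 < ⋯ < x_n`: higher-indexed variables are more significant. -/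
def MonLt {n : ℕ} (a b : Fin n →₀ ℕ) : Prop :=
  ∃ i : Fin n, a i < b i ∧ ∀ j : Fin n, i < j → a j = b j

/-- The order `P < Q` on polynomials: `P < Q` iff `lt(P) <_lex lt(Q)`, or the
heading terms agree and the tails satisfy `P - lm(P) < Q - lm(Q)` (with `0 < R`
for every nonzero `R`).  Equivalently (since only supports matter): the supports
of `P` and `Q` differ and the lex-greatest monomial in their symmetric
difference belongs to the support of `Q`. -/
def PoLt (P Q : MvPolynomial (Fin n) K) : Prop :=
  ∃ m ∈ Q.support \ P.support,
    ∀ m' ∈ (P.support \ Q.support) ∪ (Q.support \ P.support), m' ≠ m → MonLt m' m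

/-- `P ≈ Q` : neither `P < Q` nor `Q < P`. -/
def PoEq (P Q : MvPolynomial (Fin n) K) : Prop := ¬ PoLt P Q ∧ ¬ PoLt Q P

/-- The class of a polynomial: the (1-based) index of its leading variable;
`0` for (nonzero) constants. -/
noncomputable def cls (P : MvPolynomial (Fin n) K) : ℕ :=
  P.vars.sup fun i => i.1 + 1

/-- The leading degree of a polynomial: its degree in its leading variable;
`0` for constants. -/
noncomputable def ldeg (P : MvPolynomial (Fin n) K) : ℕ :=
  WithBot.recBotCoe 0 (fun i => P.degreeOf i) P.vars.max

/-- Ranking of polynomials: `P ≺ Q`. -/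
def RankLt (P Q : MvPolynomial (Fin n) K) : Prop :=
  cls P < cls Q ∨ (cls P = cls Q ∧ ldeg P < ldeg Q)

/-- `P ∼ Q` : neither `P ≺ Q` nor `Q ≺ P`. -/
def RankEq (P Q : MvPolynomial (Fin n) K) : Prop := ¬ RankLt P Q ∧ ¬ RankLt Q P

/-- `P` is reduced w.r.t. a nonconstant `Q`: `deg(P, lv(Q)) < ldeg(Q)`. -/
def ReducedWrt (P Q : MvPolynomial (Fin n) K) : Prop :=
  ∀ i : Fin n, Q.vars.max = (i : WithBot (Fin n)) → P.degreeOf i < Q.degreeOf i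

/-- A triangular set: a list of nonconstant polynomials with strictly
increasing leading variables. -/
def IsTriangular (T : List (MvPolynomial (Fin n) K)) : Prop :=
  (∀ P ∈ T, 0 < cls P) ∧ T.Chain' fun P Q => cls P < cls Q

/-- Ranking of triangular sets (as lists): `T ≺ S`. -/
def TriLt (T S : List (MvPolynomial (Fin n) K)) : Prop :=
  (∃ i, i < T.length ∧ i < S.length ∧
      (∀ j < i, RankEq (T.getD j 0) (S.getD j 0)) ∧
      RankLt (T.getD i 0) (S.getD i 0)) ∨
  (S.length < T.length ∧ ∀ j < S.length, RankEq (T.getD j 0) (S.getD j 0))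

/-- `T ∼ S` : neither `T ≺ S` nor `S ≺ T`. -/
def TriEq (T S : List (MvPolynomial (Fin n) K)) : Prop := ¬ TriLt T S ∧ ¬ TriLt S T

/-- An ascending set: either a triangular set in which every element is reduced
w.r.t. all earlier elements (non-contradictory), or a single nonzero constant
(contradictory). -/
def IsAscending (A : List (MvPolynomial (Fin n) K)) : Prop :=
  (IsTriangular A ∧ A.Pairwise fun P Q => ReducedWrt Q P) ∨
  ∃ a : K, a ≠ 0 ∧ A = [MvPolynomial.C a]

/-- A basic set of a polynomial set `S`: an ascending set contained in `S`
such that no ascending set contained in `S` has strictly lower ranking. -/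
def IsBasicSet (B : List (MvPolynomial (Fin n) K))
    (S : Set (MvPolynomial (Fin n) K)) : Prop :=
  IsAscending B ∧ (∀ b ∈ B, b ∈ S) ∧
    ∀ B' : List (MvPolynomial (Fin n) K),
      IsAscending B' → (∀ b ∈ B', b ∈ S) → ¬ TriLt B' B

/-- A medial set of a polynomial set `S`: an ascending set contained in the
ideal `⟨S⟩` whose ranking is not higher than that of any basic set of `S`. -/
def IsMedialSet (M : List (MvPolynomial (Fin n) K))
    (S : Set (MvPolynomial (Fin n) K)) : Prop :=
  IsAscending M ∧ (∀ F ∈ M, F ∈ Ideal.span S) ∧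
    ∀ B : List (MvPolynomial (Fin n) K), IsBasicSet B S → ¬ TriLt B M

/-- The leading coefficient of `P` regarded as a univariate polynomial in
`x_q`, as a polynomial in the remaining variables. -/
noncomputable def lcOf (P : MvPolynomial (Fin n) K) (q : Fin n) :
    MvPolynomial (Fin n) K :=
  ∑ m ∈ P.support.filter fun m => m q = P.degreeOf q,
    MvPolynomial.monomial (m.erase q) (P.coeff m)

/-- The initial of `P`: its leading coefficient w.r.t. its leading variable. -/
noncomputable def initOf (P : MvPolynomial (Fin n) K) : MvPolynomial (Fin n) K :=
  WithBot.recBotCoe P (fun q => lcOf P q) P.vars.max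

/-!
Put `S = P ∪ M ∪ {N}`. A medial set of `S` ranks no higher than any basic set of `S`, and a
basic set of the finite set `S` ranks no higher than any ascending set with elements in `S`.
Such an ascending set is obtained by inserting `N` into `M`: the elements of `M` of class
below `cls N`, followed by `N`. Since `N` is reduced with respect to `M`, it ranks strictly
below the first element of `M` it replaces, so this set ranks strictly below `M`.
-/

/-- Keys live in the order dual: a lower rank gives a larger key, and in the lexicographic
order on lists a proper prefix is smaller, just as a triangular set ranks below its proper
prefixes. -/
noncomputable def rankKey (P : MvPolynomial (Fin n) K) : (Lex (ℕ × ℕ))ᵒᵈ :=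
  OrderDual.toDual (toLex (cls P, ldeg P))

lemma rankLt_iff_rankKey_lt {P Q : MvPolynomial (Fin n) K} :
    RankLt P Q ↔ rankKey Q < rankKey P :=
  (Prod.Lex.lt_iff (x := toLex (cls P, ldeg P)) (y := toLex (cls Q, ldeg Q))).symm

lemma rankEq_iff_rankKey_eq {P Q : MvPolynomial (Fin n) K} :
    RankEq P Q ↔ rankKey P = rankKey Q := by
  rw [RankEq, rankLt_iff_rankKey_lt, rankLt_iff_rankKey_lt, not_lt, not_lt, le_antisymm_iff]

lemma triLt_cons_cons_iff {t s : MvPolynomial (Fin n) K} {T S : List (MvPolynomial (Fin n) K)} :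
    TriLt (t :: T) (s :: S) ↔ RankLt t s ∨ (RankEq t s ∧ TriLt T S) := by
  conv_lhs => rw [TriLt, ← Nat.or_exists_add_one]
  simp only [TriLt, List.length_cons, List.getD_cons_zero, List.getD_cons_succ,
    Nat.forall_lt_succ_left, Nat.add_lt_add_iff_right, Nat.not_lt_zero, Nat.zero_lt_succ]
  grind

lemma triLt_iff_map_rankKey_lt {T S : List (MvPolynomial (Fin n) K)} :
    TriLt T S ↔ S.map rankKey < T.map rankKey := by
  induction T generalizing S with
  | nil => simp [TriLt, List.not_lt_nil]
  | cons t T ih =>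
    cases S with
    | nil => simp [TriLt, List.nil_lt_cons]
    | cons s S =>
      rw [triLt_cons_cons_iff, List.map_cons, List.map_cons, List.cons_lt_cons_iff,
        rankLt_iff_rankKey_lt, rankEq_iff_rankKey_eq, ih, eq_comm]

lemma triLt_append_left (T : List (MvPolynomial (Fin n) K))
    {X Y : List (MvPolynomial (Fin n) K)} (h : TriLt X Y) : TriLt (T ++ X) (T ++ Y) := by
  induction T with
  | nil => exact h
  | cons t T ih => exact triLt_cons_cons_iff.mpr (Or.inr ⟨rankEq_iff_rankKey_eq.mpr rfl, ih⟩)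

lemma cls_eq_zero_iff {P : MvPolynomial (Fin n) K} : cls P = 0 ↔ P.vars = ∅ := by
  simp [cls, Finset.eq_empty_iff_forall_notMem]

lemma cls_eq_of_vars_max_eq {P : MvPolynomial (Fin n) K} {i : Fin n} (h : P.vars.max = i) :
    cls P = i.1 + 1 := by
  refine le_antisymm (Finset.sup_le fun j hj => ?_)
    (Finset.le_sup (f := fun i : Fin n => i.1 + 1) (Finset.mem_of_max h))
  have hji : (j : WithBot (Fin n)) ≤ i := h ▸ Finset.le_max hj
  exact Nat.succ_le_succ (WithBot.coe_le_coe.mp hji : j ≤ i)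

lemma exists_vars_max_eq_of_cls_pos {P : MvPolynomial (Fin n) K} (h : 0 < cls P) :
    ∃ i : Fin n, P.vars.max = i :=
  Finset.max_of_nonempty (Finset.nonempty_iff_ne_empty.mpr (cls_eq_zero_iff.not.mp h.ne'))

lemma ldeg_eq_of_vars_max_eq {P : MvPolynomial (Fin n) K} {i : Fin n} (h : P.vars.max = i) :
    ldeg P = P.degreeOf i := by
  rw [ldeg, h]
  rfl

lemma rankLt_of_reducedWrt {N Q : MvPolynomial (Fin n) K} (hQ : 0 < cls Q)
    (hle : cls N ≤ cls Q) (hred : ReducedWrt N Q) : RankLt N Q := by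
  rcases hle.lt_or_eq with h | h
  · exact Or.inl h
  obtain ⟨i, hi⟩ := exists_vars_max_eq_of_cls_pos (h ▸ hQ)
  obtain ⟨j, hj⟩ := exists_vars_max_eq_of_cls_pos hQ
  have hij : i = j := by
    have := cls_eq_of_vars_max_eq hi
    have := cls_eq_of_vars_max_eq hj
    exact Fin.ext (by omega)
  refine Or.inr ⟨h, ?_⟩
  rw [ldeg_eq_of_vars_max_eq hi, ldeg_eq_of_vars_max_eq hj, hij]
  exact hred j hj

lemma Set.Finite.setOf_nodup_forall_mem {α : Type*} {s : Set α} (hs : s.Finite) :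
    {l : List α | l.Nodup ∧ ∀ x ∈ l, x ∈ s}.Finite := by
  have := hs.fintype
  refine ((List.finite_length_le s (Fintype.card s)).image (List.map (↑))).subset ?_
  rintro l ⟨hnd, hmem⟩
  lift l to List s using hmem
  exact ⟨l, (hnd.of_map _).length_le_card, rfl⟩

lemma IsAscending.nodup {A : List (MvPolynomial (Fin n) K)} (hA : IsAscending A) : A.Nodup := by
  rcases hA with ⟨⟨-, hchain⟩, -⟩ | ⟨a, -, rfl⟩
  · exact List.Nodup.of_map cls ((List.isChain_map cls).mpr hchain).pairwise.nodup
  · exact List.nodup_singleton _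

lemma IsAscending.isTriangular_of_mem {A : List (MvPolynomial (Fin n) K)} (hA : IsAscending A)
    {a : MvPolynomial (Fin n) K} (ha : a ∈ A) (hcls : 0 < cls a) :
    IsTriangular A ∧ A.Pairwise fun P Q => ReducedWrt Q P := by
  refine hA.resolve_right ?_
  rintro ⟨c, -, rfl⟩
  rw [List.mem_singleton.mp ha, cls_eq_zero_iff.mpr (vars_C)] at hcls
  exact hcls.false

lemma exists_isBasicSet_not_triLt {S : Set (MvPolynomial (Fin n) K)} (hS : S.Finite)
    {A : List (MvPolynomial (Fin n) K)} (hA : IsAscending A) (hAS : ∀ a ∈ A, a ∈ S) :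
    ∃ B, IsBasicSet B S ∧ ¬ TriLt A B := by
  set 𝒜 := {B : List (MvPolynomial (Fin n) K) | IsAscending B ∧ ∀ b ∈ B, b ∈ S}
  have h𝒜 : 𝒜.Finite := hS.setOf_nodup_forall_mem.subset fun B hB => ⟨hB.1.nodup, hB.2⟩
  obtain ⟨B, hB, hmax⟩ := Set.exists_max_image 𝒜 (List.map rankKey) h𝒜 ⟨A, hA, hAS⟩
  refine ⟨B, ⟨hB.1, hB.2, fun B' hB' hB'S => ?_⟩, ?_⟩ <;>
    rw [triLt_iff_map_rankKey_lt, not_lt]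
  exacts [hmax B' ⟨hB', hB'S⟩, hmax A ⟨hA, hAS⟩]

section Insertion

variable {M : List (MvPolynomial (Fin n) K)} {N : MvPolynomial (Fin n) K}

lemma triLt_takeWhile_append_singleton (hM : IsTriangular M)
    (hNred : ∀ Q ∈ M, ReducedWrt N Q) :
    TriLt (M.takeWhile (fun Q => cls Q < cls N) ++ [N]) M := by
  set p : MvPolynomial (Fin n) K → Bool := fun Q => cls Q < cls N
  conv_rhs => rw [← List.takeWhile_append_dropWhile (p := p) (l := M)]
  refine triLt_append_left _ ?_
  rcases hd : M.dropWhile p with _ | ⟨q, d⟩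
  · exact Or.inr ⟨by simp, by simp⟩
  have hqM : q ∈ M := (List.dropWhile_suffix p).subset (hd ▸ List.mem_cons_self)
  have hle : cls N ≤ cls q := by
    simpa [hd, p] using List.head_dropWhile_not p (l := M) (by simp [hd])
  exact triLt_cons_cons_iff.mpr (Or.inl (rankLt_of_reducedWrt (hM.1 q hqM) hle (hNred q hqM)))

lemma isAscending_takeWhile_append_singleton (hM : IsTriangular M)
    (hMred : M.Pairwise fun P Q => ReducedWrt Q P) (hN : N ≠ 0)
    (hNred : ∀ Q ∈ M, ReducedWrt N Q) :
    IsAscending (M.takeWhile (fun Q => cls Q < cls N) ++ [N]) := by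
  set T := M.takeWhile (fun Q => cls Q < cls N)
  have hTM : T <+: M := List.takeWhile_prefix _
  have hT : ∀ Q ∈ T, cls Q < cls N := fun Q hQ => by simpa using List.mem_takeWhile_imp hQ
  rcases (cls N).eq_zero_or_pos with hcN | hcN
  · have hT0 : T = [] :=
      List.eq_nil_iff_forall_not_mem.mpr fun Q hQ => by simpa [hcN] using hT Q hQ
    have hNC : N = C (N.coeff 0) := vars_eq_empty_iff_eq_C.mp (cls_eq_zero_iff.mp hcN)
    refine Or.inr ⟨N.coeff 0, fun h0 => hN (by rw [hNC, h0, map_zero]), ?_⟩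
    rw [hT0, List.nil_append, ← hNC]
  · refine Or.inl ⟨⟨fun Q hQ => ?_, ?_⟩, ?_⟩
    · rcases List.mem_append.mp hQ with hQ | hQ
      exacts [hM.1 Q (hTM.subset hQ), List.mem_singleton.mp hQ ▸ hcN]
    · refine List.isChain_append.mpr ⟨hM.2.prefix hTM, List.isChain_singleton N, ?_⟩
      intro Q hQ N' hN'
      rw [List.head?_cons, Option.mem_some_iff] at hN'
      exact hN' ▸ hT Q (List.mem_of_mem_getLast? hQ)
    · refine List.pairwise_append.mpr
        ⟨hMred.sublist hTM.sublist, List.pairwise_singleton _ _, fun Q hQ N' hN' => ?_⟩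
      exact List.mem_singleton.mp hN' ▸ hNred Q (hTM.subset hQ)

end Insertion

theorem medialSet_of_enlarged_lt_general
    {n : ℕ} {K : Type*} [Field K]
    (P : Finset (MvPolynomial (Fin n) K))
    (M : List (MvPolynomial (Fin n) K))
    (hM : IsMedialSet M (↑P : Set (MvPolynomial (Fin n) K)))
    (hM1 : ∃ (M₁ : MvPolynomial (Fin n) K) (Ms : List (MvPolynomial (Fin n) K)),
      M = M₁ :: Ms ∧ 0 < cls M₁)
    (N : MvPolynomial (Fin n) K) (hN : N ≠ 0)
    (hNred : ∀ Q ∈ M, ReducedWrt N Q) :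
    ∀ M' : List (MvPolynomial (Fin n) K),
      IsMedialSet M' ((↑P : Set (MvPolynomial (Fin n) K)) ∪ {F | F ∈ M} ∪ {N}) →
      TriLt M' M := by
  intro M' hM'
  obtain ⟨M₁, Ms, hMeq, hM₁⟩ := hM1
  obtain ⟨hMtri, hMred⟩ := hM.1.isTriangular_of_mem (hMeq ▸ List.mem_cons_self) hM₁
  set S : Set (MvPolynomial (Fin n) K) := ↑P ∪ {F | F ∈ M} ∪ {N}
  have hS : S.Finite := (P.finite_toSet.union M.finite_toSet).union (Set.finite_singleton N)
  set A := M.takeWhile (fun Q => cls Q < cls N) ++ [N]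
  have hAS : ∀ a ∈ A, a ∈ S := by
    intro a ha
    rcases List.mem_append.mp ha with ha | ha
    exacts [Or.inl (Or.inr ((List.takeWhile_prefix _).subset ha)),
      Or.inr (List.mem_singleton.mp ha)]
  obtain ⟨B, hB, hAB⟩ := exists_isBasicSet_not_triLt hS
    (isAscending_takeWhile_append_singleton hMtri hMred hN hNred) hAS
  have hAM := triLt_takeWhile_append_singleton hMtri hNred
  have hBM' := hM'.2.2 B hB
  rw [triLt_iff_map_rankKey_lt] at hAM hAB hBM' ⊢
  calc M.map rankKey < A.map rankKey := hAM
    _ ≤ B.map rankKey := not_lt.mp hAB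
    _ ≤ M'.map rankKey := not_lt.mp hBM'

/-- if `M` is a medial set of a finite set `P` (containing a nonzero
polynomial) with nonconstant first element, and `N ≠ 0` is reduced w.r.t. `M`, then
every medial set of `P ∪ M ∪ {N}` has strictly lower ranking than `M`. -/
theorem medialSet_of_enlarged_lt
    {n : ℕ} {K : Type*} [Field K] (hn : 1 ≤ n)
    (P : Finset (MvPolynomial (Fin n) K)) (hP : ∃ p ∈ P, p ≠ 0)
    (M : List (MvPolynomial (Fin n) K))
    (hM : IsMedialSet M (↑P : Set (MvPolynomial (Fin n) K)))
    (hM1 : ∃ (M₁ : MvPolynomial (Fin n) K) (Ms : List (MvPolynomial (Fin n) K)),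
      M = M₁ :: Ms ∧ 0 < cls M₁)
    (N : MvPolynomial (Fin n) K) (hN : N ≠ 0)
    (hNred : ∀ Q ∈ M, ReducedWrt N Q) :
    ∀ M' : List (MvPolynomial (Fin n) K),
      IsMedialSet M' ((↑P : Set (MvPolynomial (Fin n) K)) ∪ {F | F ∈ M} ∪ {N}) →
      TriLt M' M :=
  medialSet_of_enlarged_lt_general P M hM hM1 N hN hNred
end

section
/- Under the generalized-characteristic-set hypotheses on P, C = [C_1,…,C_r], I_j = ini(C_j) and I = {I_1,…,I_r}, for any extension field L of K one has the inclusions Zero(C/I) ⊆ Zero(P) ⊆ Zero(C), where zeros are taken in L^n. -/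
open MvPolynomial

variable {n : ℕ} {K : Type*} [Field K]

/-!
At a zero `a` of `C` where no initial vanishes, evaluating the pseudo-division identity
`(∏ Iⱼ ^ sⱼ) · q = ∑ Gⱼ · Cⱼ` at `a` gives a nonzero multiple of `q(a)` equal to `0`, so every
`q ∈ Q` vanishes at `a`, hence so does all of `⟨Q⟩ = ⟨P⟩`. Conversely `C ⊆ ⟨P⟩`, so every zero
of `P` is a zero of `C`.
-/

theorem map_eq_zero_of_mem_ideal_span {R S F : Type*} [CommSemiring R] [Semiring S]
    [FunLike F R S] [RingHomClass F R S] (f : F) {s : Set R} (hs : ∀ x ∈ s, f x = 0)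
    {x : R} (hx : x ∈ Ideal.span s) : f x = 0 :=
  RingHom.mem_ker.1 (Ideal.span_le (I := RingHom.ker f).2 hs hx)

theorem map_eq_zero_of_prod_pow_mul_eq_sum {R S F ι : Type*} [CommSemiring R] [CommSemiring S]
    [Nontrivial S] [NoZeroDivisors S] [FunLike F R S] [RingHomClass F R S] (f : F) {t : Finset ι}
    {I c G : ι → R} {e : ι → ℕ} {q : R}
    (h : (∏ j ∈ t, I j ^ e j) * q = ∑ j ∈ t, G j * c j)
    (hc : ∀ j ∈ t, f (c j) = 0) (hI : ∀ j ∈ t, f (I j) ≠ 0) : f q = 0 := by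
  have hsum : f (∑ j ∈ t, G j * c j) = 0 := by
    rw [map_sum]
    exact Finset.sum_eq_zero fun j hj => by rw [map_mul, hc j hj, mul_zero]
  have hprod : f (∏ j ∈ t, I j ^ e j) ≠ 0 := by
    rw [map_prod]
    exact Finset.prod_ne_zero_iff.2 fun j hj => by rw [map_pow]; exact pow_ne_zero _ (hI j hj)
  rw [← h, map_mul] at hsum
  exact (mul_eq_zero.1 hsum).resolve_left hprod

theorem List.getD_mem_of_mem_range {α : Type*} {l : List α} {d : α} {j : ℕ}
    (hj : j ∈ Finset.range l.length) : l.getD j d ∈ l := by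
  rw [Finset.mem_range] at hj
  rw [List.getD_eq_getElem l d hj]
  exact List.getElem_mem hj

theorem genCharSet_zero_inclusions_general
    {n : ℕ} {K : Type*} [Field K]
    {L : Type*} [Field L] [Algebra K L]
    (P : Finset (MvPolynomial (Fin n) K))
    (C : List (MvPolynomial (Fin n) K))
    (hCideal : ∀ c ∈ C, c ∈ Ideal.span (↑P : Set (MvPolynomial (Fin n) K)))
    (hprem : ∃ Q : Finset (MvPolynomial (Fin n) K),
      Ideal.span (↑Q : Set (MvPolynomial (Fin n) K))
          = Ideal.span (↑P : Set (MvPolynomial (Fin n) K)) ∧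
        ∀ q ∈ Q, ∃ (s : ℕ → ℕ) (G : ℕ → MvPolynomial (Fin n) K),
          (∏ j ∈ Finset.range C.length, initOf (C.getD j 0) ^ s j) * q
            = ∑ j ∈ Finset.range C.length, G j * C.getD j 0) :
    ∀ a : Fin n → L,
      (((∀ c ∈ C, MvPolynomial.aeval a c = 0) ∧
          (∀ c ∈ C, MvPolynomial.aeval a (initOf c) ≠ 0)) →
        ∀ p ∈ P, MvPolynomial.aeval a p = 0) ∧
      ((∀ p ∈ P, MvPolynomial.aeval a p = 0) →
        ∀ c ∈ C, MvPolynomial.aeval a c = 0) := by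
  intro a
  obtain ⟨Q, hQP, hQ⟩ := hprem
  refine ⟨fun ⟨hCzero, hInonzero⟩ p hp => ?_,
    fun hPzero c hc => map_eq_zero_of_mem_ideal_span _ hPzero (hCideal c hc)⟩
  have hQzero : ∀ q ∈ Q, MvPolynomial.aeval a q = 0 := fun q hq => by
    obtain ⟨s, G, h⟩ := hQ q hq
    exact map_eq_zero_of_prod_pow_mul_eq_sum _ h
      (fun j hj => hCzero _ (List.getD_mem_of_mem_range hj))
      (fun j hj => hInonzero _ (List.getD_mem_of_mem_range hj))
  exact map_eq_zero_of_mem_ideal_span _ hQzero (hQP ▸ Ideal.subset_span hp)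

/-- under the generalized-characteristic-set hypotheses,
`Zero(C/I) ⊆ Zero(P) ⊆ Zero(C)` in any extension field `L` of `K`. -/
theorem genCharSet_zero_inclusions
    {n : ℕ} {K : Type*} [Field K] (hn : 1 ≤ n)
    {L : Type*} [Field L] [Algebra K L]
    (P : Finset (MvPolynomial (Fin n) K)) (hPne : P.Nonempty)
    (C : List (MvPolynomial (Fin n) K))
    (hCasc : IsAscending C) (hCnc : ∀ c ∈ C, 0 < cls c)
    (hCideal : ∀ c ∈ C, c ∈ Ideal.span (↑P : Set (MvPolynomial (Fin n) K)))
    (hprem : ∃ Q : Finset (MvPolynomial (Fin n) K),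
      Ideal.span (↑Q : Set (MvPolynomial (Fin n) K))
          = Ideal.span (↑P : Set (MvPolynomial (Fin n) K)) ∧
        ∀ q ∈ Q, ∃ (s : ℕ → ℕ) (G : ℕ → MvPolynomial (Fin n) K),
          (∏ j ∈ Finset.range C.length, initOf (C.getD j 0) ^ s j) * q
            = ∑ j ∈ Finset.range C.length, G j * C.getD j 0) :
    ∀ a : Fin n → L,
      (((∀ c ∈ C, MvPolynomial.aeval a c = 0) ∧
          (∀ c ∈ C, MvPolynomial.aeval a (initOf c) ≠ 0)) →
        ∀ p ∈ P, MvPolynomial.aeval a p = 0) ∧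
      ((∀ p ∈ P, MvPolynomial.aeval a p = 0) →
        ∀ c ∈ C, MvPolynomial.aeval a c = 0) :=
  genCharSet_zero_inclusions_general P C hCideal hprem
end

section
/- Under the generalized-characteristic-set hypotheses on P, C = [C_1,…,C_r], I_j = ini(C_j), I = {I_1,…,I_r}, and with P_j = P ∪ {I_j}, for any extension field L of K one has the zero decomposition Zero(P) = Zero(C/I) ∪ ⋃_{j=1}^r Zero(P_j), where zeros are taken in L^n. -/
open MvPolynomial

variable {n : ℕ} {K : Type*} [Field K]

/-! A zero of `P` at which some initial vanishes lies in the second part; at any other zero of `P`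
the whole of `C ⊆ ⟨P⟩` vanishes while no initial does. Conversely, at a zero of `C` where no
initial vanishes, the pseudo-remainder identity `(∏ I_j ^ s_j) * q = ∑ G_j * C_j` forces `q` to
vanish, so the zero kills all of `⟨Q⟩ = ⟨P⟩`. -/

section Vanishing

variable {σ R A : Type*} [CommSemiring R] {a : σ → A}

theorem MvPolynomial.aeval_eq_zero_of_mem_span [CommSemiring A] [Algebra R A]
    {S : Set (MvPolynomial σ R)} (hS : ∀ p ∈ S, aeval a p = 0) {F : MvPolynomial σ R}
    (hF : F ∈ Ideal.span S) : aeval a F = 0 :=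
  (Ideal.span_le (I := RingHom.ker (aeval a))).2 hS hF

theorem MvPolynomial.aeval_eq_zero_of_prod_pow_mul_eq_sum [CommRing A] [IsDomain A]
    [Algebra R A] {ι : Type*} {s : Finset ι} {I c G : ι → MvPolynomial σ R} {e : ι → ℕ}
    {q : MvPolynomial σ R} (h : (∏ j ∈ s, I j ^ e j) * q = ∑ j ∈ s, G j * c j)
    (hc : ∀ j ∈ s, aeval a (c j) = 0) (hI : ∀ j ∈ s, aeval a (I j) ≠ 0) :
    aeval a q = 0 := by
  have hsum : aeval a ((∏ j ∈ s, I j ^ e j) * q) = 0 := by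
    rw [h, map_sum]
    exact Finset.sum_eq_zero fun j hj => by rw [map_mul, hc j hj, mul_zero]
  have hprod : aeval a (∏ j ∈ s, I j ^ e j) ≠ 0 := by
    rw [map_prod]
    exact Finset.prod_ne_zero_iff.2 fun j hj => by rw [map_pow]; exact pow_ne_zero _ (hI j hj)
  rw [map_mul] at hsum
  exact (mul_eq_zero.1 hsum).resolve_left hprod

end Vanishing

theorem genCharSet_zero_decomposition_general
    {n : ℕ} {K : Type*} [Field K]
    {L : Type*} [Field L] [Algebra K L]
    (P : Finset (MvPolynomial (Fin n) K))
    (C : List (MvPolynomial (Fin n) K))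
    (hCideal : ∀ c ∈ C, c ∈ Ideal.span (↑P : Set (MvPolynomial (Fin n) K)))
    (hprem : ∃ Q : Finset (MvPolynomial (Fin n) K),
      Ideal.span (↑Q : Set (MvPolynomial (Fin n) K))
          = Ideal.span (↑P : Set (MvPolynomial (Fin n) K)) ∧
        ∀ q ∈ Q, ∃ (s : ℕ → ℕ) (G : ℕ → MvPolynomial (Fin n) K),
          (∏ j ∈ Finset.range C.length, initOf (C.getD j 0) ^ s j) * q
            = ∑ j ∈ Finset.range C.length, G j * C.getD j 0) :
    ∀ a : Fin n → L,
      (∀ p ∈ P, MvPolynomial.aeval a p = 0) ↔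
        (((∀ c ∈ C, MvPolynomial.aeval a c = 0) ∧
            (∀ c ∈ C, MvPolynomial.aeval a (initOf c) ≠ 0)) ∨
          (∃ c ∈ C, (∀ p ∈ P, MvPolynomial.aeval a p = 0) ∧
            MvPolynomial.aeval a (initOf c) = 0)) := by
  intro a
  constructor
  · intro hP
    by_cases hI : ∃ c ∈ C, aeval a (initOf c) = 0
    · obtain ⟨c, hc, hc0⟩ := hI
      exact Or.inr ⟨c, hc, hP, hc0⟩
    · push Not at hI
      exact Or.inl ⟨fun c hc => aeval_eq_zero_of_mem_span hP (hCideal c hc), hI⟩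
  · rintro (⟨hC, hI⟩ | ⟨-, -, hP, -⟩)
    · obtain ⟨Q, hQP, hQ⟩ := hprem
      have hmem : ∀ j ∈ Finset.range C.length, C.getD j 0 ∈ C := fun j hj =>
        List.getD_eq_getElem C 0 (Finset.mem_range.1 hj) ▸ List.getElem_mem _
      have hQzero : ∀ q ∈ Q, aeval a q = 0 := fun q hq => by
        obtain ⟨s, G, hsG⟩ := hQ q hq
        exact aeval_eq_zero_of_prod_pow_mul_eq_sum hsG (fun j hj => hC _ (hmem j hj))
          fun j hj => hI _ (hmem j hj)
      exact fun p hp => aeval_eq_zero_of_mem_span hQzero (hQP ▸ Ideal.subset_span hp)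
    · exact hP

/-- under the generalized-characteristic-set hypotheses,
`Zero(P) = Zero(C/I) ∪ ⋃_j Zero(P ∪ {I_j})` in any extension field `L` of `K`. -/
theorem genCharSet_zero_decomposition
    {n : ℕ} {K : Type*} [Field K] (hn : 1 ≤ n)
    {L : Type*} [Field L] [Algebra K L]
    (P : Finset (MvPolynomial (Fin n) K)) (hPne : P.Nonempty)
    (C : List (MvPolynomial (Fin n) K))
    (hCasc : IsAscending C) (hCnc : ∀ c ∈ C, 0 < cls c)
    (hCideal : ∀ c ∈ C, c ∈ Ideal.span (↑P : Set (MvPolynomial (Fin n) K)))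
    (hprem : ∃ Q : Finset (MvPolynomial (Fin n) K),
      Ideal.span (↑Q : Set (MvPolynomial (Fin n) K))
          = Ideal.span (↑P : Set (MvPolynomial (Fin n) K)) ∧
        ∀ q ∈ Q, ∃ (s : ℕ → ℕ) (G : ℕ → MvPolynomial (Fin n) K),
          (∏ j ∈ Finset.range C.length, initOf (C.getD j 0) ^ s j) * q
            = ∑ j ∈ Finset.range C.length, G j * C.getD j 0) :
    ∀ a : Fin n → L,
      (∀ p ∈ P, MvPolynomial.aeval a p = 0) ↔
        (((∀ c ∈ C, MvPolynomial.aeval a c = 0) ∧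
            (∀ c ∈ C, MvPolynomial.aeval a (initOf c) ≠ 0)) ∨
          (∃ c ∈ C, (∀ p ∈ P, MvPolynomial.aeval a p = 0) ∧
            MvPolynomial.aeval a (initOf c) = 0)) :=
  genCharSet_zero_decomposition_general P C hCideal hprem
end
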